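/- E[⟨x,x'⟩_φ²] = ⟨x,x'⟩² + (1/m)( ∑_{i≠j} x_i² (x'_j)² + ∑_{i≠j} x_i x'_i x_j x'_j ). -/

import Mathlib

open Finset

/-- Sign associated to a boolean. -/
noncomputable def sgn (b : Bool) : ℝ := if b then 1 else -1

/-- Hashed inner product for fixed hash `h` and sign `ξ`. -/
noncomputable def hip {d m : ℕ} (h : Fin d → Fin m) (ξ : Fin d → Bool)
    (x x' : Fin d → ℝ) : ℝ :=
  ∑ k : Fin m,
    (∑ j ∈ Finset.univ.filter (fun j => h j = k), sgn (ξ j) * x j) *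
    (∑ j ∈ Finset.univ.filter (fun j => h j = k), sgn (ξ j) * x' j)

/-- Expectation over the uniformly random pair `(h, ξ)`. -/
noncomputable def hashExp (d m : ℕ) (f : (Fin d → Fin m) → (Fin d → Bool) → ℝ) : ℝ :=
  (∑ h : Fin d → Fin m, ∑ ξ : Fin d → Bool, f h ξ) / ((m : ℝ) ^ d * 2 ^ d)

/-!
Expanding the buckets, `⟨x,x'⟩_φ = ∑_{i,j} [h i = h j] ξ_i ξ_j x_i x'_j`; the diagonal terms add up
to `⟨x,x'⟩`, so `⟨x,x'⟩_φ = ⟨x,x'⟩ + R` with `R` a sum over ordered pairs `i ≠ j`. Flipping a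
single sign `ξ_k` is a bijection of the sign vectors, so the average of a product of signs vanishes
as soon as some index occurs in it exactly once. Hence `E[R] = 0`, and in `E[R²]` the pair `(p, q)`
only interacts with `(i, j)` when `(p, q) = (i, j)` or `(j, i)`; the coefficient is then the
collision indicator `[h i = h j]`, whose mean is `1/m`.
-/

lemma Finset.sum_offDiag_eq_sum_sum_erase {α M : Type*} [DecidableEq α] [AddCommMonoid M]
    (s : Finset α) (f : α × α → M) :
    ∑ a ∈ s.offDiag, f a = ∑ i ∈ s, ∑ j ∈ s.erase i, f (i, j) :=
  sum_finset_product _ _ _ fun a => by simp [mem_offDiag, and_comm (a := a.1 ≠ a.2), ne_comm]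

section Signs

variable {ι : Type*} [Fintype ι] [DecidableEq ι]

lemma sgn_mul_self (b : Bool) : sgn b * sgn b = 1 := by
  cases b <;> norm_num [sgn]

lemma sgn_not (b : Bool) : sgn (!b) = -sgn b := by
  cases b <;> norm_num [sgn]

lemma sum_sgn_mul_eq_zero {F : (ι → Bool) → ℝ} (k : ι)
    (hF : ∀ ξ, F (Function.update ξ k (!ξ k)) = F ξ) :
    ∑ ξ : ι → Bool, sgn (ξ k) * F ξ = 0 := by
  have hflip : Function.Involutive fun ξ : ι → Bool => Function.update ξ k (!ξ k) := by
    intro ξ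
    simp
  have h := Equiv.sum_comp (hflip.toPerm _) fun ξ => sgn (ξ k) * F ξ
  simp only [Function.Involutive.coe_toPerm, Function.update_self, sgn_not, hF, neg_mul,
    sum_neg_distrib] at h
  linarith

lemma sum_sgn_mul_sgn_eq_zero {i j : ι} (hij : i ≠ j) : ∑ ξ : ι → Bool, sgn (ξ i) * sgn (ξ j) = 0 :=
  sum_sgn_mul_eq_zero i fun ξ => by rw [Function.update_of_ne hij.symm]

lemma sum_sgn_mul_sgn_mul_sgn_mul_sgn_eq_zero {i j p q : ι} (hij : i ≠ j) (hpq : p ≠ q)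
    (h : ¬((p, q) = (i, j) ∨ (p, q) = (j, i))) :
    ∑ ξ : ι → Bool, sgn (ξ i) * sgn (ξ j) * (sgn (ξ p) * sgn (ξ q)) = 0 := by
  simp only [Prod.mk.injEq, not_or, not_and] at h
  obtain ⟨k, a, b, c, ha, hb, hc, hξ⟩ : ∃ k a b c : ι, a ≠ k ∧ b ≠ k ∧ c ≠ k ∧
      ∀ ξ : ι → Bool, sgn (ξ i) * sgn (ξ j) * (sgn (ξ p) * sgn (ξ q)) =
        sgn (ξ k) * (sgn (ξ a) * sgn (ξ b) * sgn (ξ c)) := by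
    by_cases hip : p = i
    · subst hip
      exact ⟨q, p, j, p, hpq, fun hjq => h.1 rfl hjq.symm, hpq, fun ξ => by ring⟩
    by_cases hiq : q = i
    · subst hiq
      exact ⟨p, q, j, q, hpq.symm, fun hjp => h.2 hjp.symm rfl, hpq.symm, fun ξ => by ring⟩
    exact ⟨i, j, p, q, hij.symm, hip, hiq, fun ξ => by ring⟩
  simp only [hξ]
  exact sum_sgn_mul_eq_zero k fun ξ => by
    rw [Function.update_of_ne ha, Function.update_of_ne hb, Function.update_of_ne hc]

end Signs

section Collisions

variable {ι β : Type*} [DecidableEq β]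

noncomputable def collisionSign (h : ι → β) (ξ : ι → Bool) (i j : ι) : ℝ :=
  if h i = h j then sgn (ξ i) * sgn (ξ j) else 0

lemma collisionSign_self (h : ι → β) (ξ : ι → Bool) (i : ι) : collisionSign h ξ i i = 1 := by
  simp [collisionSign, sgn_mul_self]

lemma collisionSign_comm (h : ι → β) (ξ : ι → Bool) (i j : ι) :
    collisionSign h ξ i j = collisionSign h ξ j i := by
  simp only [collisionSign, eq_comm (a := h i), mul_comm (sgn (ξ i))]

variable [Fintype ι] [DecidableEq ι] [Fintype β]

lemma sum_ite_apply_eq_apply_of_ne {i j : ι} (hij : i ≠ j) :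
    ∑ h : ι → β, (if h i = h j then (1 : ℝ) else 0) =
      (Fintype.card β : ℝ) ^ Fintype.card ι / Fintype.card β := by
  have hcount : ∑ h : ι → β, (if h i = h j then (1 : ℝ) else 0) =
      (Fintype.card β : ℝ) ^ (Fintype.card ι - 1) := by
    rw [← (Equiv.funSplitAt j β).symm.sum_comp, Fintype.sum_prod_type, sum_comm]
    simp [Equiv.funSplitAt, Equiv.piSplitAt, hij]
  rw [hcount]
  have hcard : 1 < Fintype.card ι := Fintype.one_lt_card_iff.mpr ⟨i, j, hij⟩
  rcases eq_or_ne (Fintype.card β : ℝ) 0 with hβ | hβ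
  · rw [hβ, zero_pow (by omega), div_zero]
  · rw [pow_sub₀ _ hβ hcard.le, pow_one, div_eq_mul_inv]

lemma sum_collisionSign_eq_zero {i j : ι} (hij : i ≠ j) :
    ∑ h : ι → β, ∑ ξ : ι → Bool, collisionSign h ξ i j = 0 := by
  refine sum_eq_zero fun h _ => ?_
  unfold collisionSign
  split_ifs
  · exact sum_sgn_mul_sgn_eq_zero hij
  · exact sum_const_zero

lemma sum_collisionSign_mul_collisionSign {a b : ι × ι} (ha : a.1 ≠ a.2) (hb : b.1 ≠ b.2) :
    ∑ h : ι → β, ∑ ξ : ι → Bool, collisionSign h ξ a.1 a.2 * collisionSign h ξ b.1 b.2 =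
      if b = a ∨ b = a.swap then
        2 ^ Fintype.card ι * ((Fintype.card β : ℝ) ^ Fintype.card ι / Fintype.card β)
      else 0 := by
  split_ifs with hba
  · have hsq : ∀ (h : ι → β) (ξ : ι → Bool),
        collisionSign h ξ a.1 a.2 * collisionSign h ξ b.1 b.2 = if h a.1 = h a.2 then 1 else 0 := by
      intro h ξ
      have hb' : collisionSign h ξ b.1 b.2 = collisionSign h ξ a.1 a.2 := by
        rcases hba with rfl | rfl
        · rfl
        · exact collisionSign_comm h ξ _ _
      rw [hb', collisionSign]
      split_ifs
      · rw [← mul_mul_mul_comm, sgn_mul_self, sgn_mul_self, one_mul]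
      · rw [zero_mul]
    simp only [hsq, sum_const, card_univ, Fintype.card_fun, Fintype.card_bool, nsmul_eq_mul,
      ← mul_sum, sum_ite_apply_eq_apply_of_ne ha]
    push_cast
    ring
  · refine sum_eq_zero fun h _ => ?_
    simp only [collisionSign, ite_mul, zero_mul, mul_ite, mul_zero]
    split_ifs
    · refine sum_sgn_mul_sgn_mul_sgn_mul_sgn_eq_zero ha hb ?_
      simpa [Prod.ext_iff, eq_comm, and_comm] using hba
    all_goals exact sum_const_zero

lemma sum_sum_offDiag_collisionSign_eq_zero (w : ι × ι → ℝ) :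
    ∑ h : ι → β, ∑ ξ : ι → Bool, ∑ a ∈ univ.offDiag, collisionSign h ξ a.1 a.2 * w a = 0 := by
  rw [(sum_congr rfl fun h _ => sum_comm).trans sum_comm]
  refine sum_eq_zero fun a ha => ?_
  simp_rw [← sum_mul]
  rw [sum_collisionSign_eq_zero (mem_offDiag.mp ha).2.2, zero_mul]

lemma sum_sum_sq_offDiag_collisionSign (w : ι × ι → ℝ) :
    ∑ h : ι → β, ∑ ξ : ι → Bool, (∑ a ∈ univ.offDiag, collisionSign h ξ a.1 a.2 * w a) ^ 2 =
      2 ^ Fintype.card ι * ((Fintype.card β : ℝ) ^ Fintype.card ι / Fintype.card β) *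
        ∑ a ∈ univ.offDiag, w a * (w a + w a.swap) := by
  simp_rw [sq, sum_mul_sum]
  rw [(sum_congr rfl fun h _ => sum_comm).trans sum_comm, mul_sum]
  refine sum_congr rfl fun a ha => ?_
  rw [(sum_congr rfl fun h _ => sum_comm).trans sum_comm]
  have ha' := (mem_offDiag.mp ha).2.2
  have hpair : {a, a.swap} ⊆ (univ.offDiag : Finset (ι × ι)) := by
    simp [insert_subset_iff, ha', ha'.symm]
  have hswap : a ≠ a.swap := fun h => ha' (congrArg Prod.fst h)
  calc ∑ b ∈ univ.offDiag, ∑ h : ι → β, ∑ ξ : ι → Bool,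
        collisionSign h ξ a.1 a.2 * w a * (collisionSign h ξ b.1 b.2 * w b)
      = ∑ b ∈ univ.offDiag, if b ∈ ({a, a.swap} : Finset (ι × ι)) then
          2 ^ Fintype.card ι * ((Fintype.card β : ℝ) ^ Fintype.card ι / Fintype.card β) *
            (w a * w b) else 0 := by
        refine sum_congr rfl fun b hb => ?_
        simp only [mem_insert, mem_singleton]
        rw [← ite_zero_mul, ← sum_collisionSign_mul_collisionSign ha'
          (mem_offDiag.mp hb).2.2, sum_mul]
        exact sum_congr rfl fun h _ => by rw [sum_mul]; exact sum_congr rfl fun ξ _ => by ring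
    _ = _ := by
        rw [sum_ite_mem, inter_eq_right.mpr hpair, sum_pair hswap]
        ring

end Collisions

lemma hip_eq_sum_collisionSign_mul {d m : ℕ} (h : Fin d → Fin m) (ξ : Fin d → Bool) (x x' : Fin d → ℝ) :
    hip h ξ x x' = ∑ i, ∑ j, collisionSign h ξ i j * (x i * x' j) := by
  simp only [hip, collisionSign, sum_filter, sum_mul_sum]
  rw [sum_comm]
  refine sum_congr rfl fun i _ => ?_
  rw [sum_comm]
  refine sum_congr rfl fun j _ => ?_
  simp only [ite_mul, zero_mul, mul_ite, mul_zero, sum_ite_eq, mem_univ, if_true]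
  split_ifs
  · ring
  · rfl

lemma hip_eq_add_sum_offDiag {d m : ℕ} (h : Fin d → Fin m) (ξ : Fin d → Bool)
    (x x' : Fin d → ℝ) :
    hip h ξ x x' = ∑ i, x i * x' i +
      ∑ a ∈ univ.offDiag, collisionSign h ξ a.1 a.2 * (x a.1 * x' a.2) := by
  rw [hip_eq_sum_collisionSign_mul, sum_offDiag_eq_sum_sum_erase, ← sum_add_distrib]
  refine sum_congr rfl fun i _ => ?_
  rw [← add_sum_erase _ _ (mem_univ i), collisionSign_self, one_mul]

lemma sum_sum_hip_sq {d m : ℕ} (x x' : Fin d → ℝ) :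
    ∑ h : Fin d → Fin m, ∑ ξ : Fin d → Bool, hip h ξ x x' ^ 2 =
      (m : ℝ) ^ d * 2 ^ d * (∑ i, x i * x' i) ^ 2 +
        2 ^ d * ((m : ℝ) ^ d / m) *
          ((∑ i, ∑ j ∈ univ.erase i, x i ^ 2 * x' j ^ 2) +
            ∑ i, ∑ j ∈ univ.erase i, x i * x' i * x j * x' j) := by
  set D := ∑ i, x i * x' i
  set R : (Fin d → Fin m) → (Fin d → Bool) → ℝ := fun h ξ =>
    ∑ a ∈ univ.offDiag, collisionSign h ξ a.1 a.2 * (x a.1 * x' a.2)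
  calc ∑ h : Fin d → Fin m, ∑ ξ : Fin d → Bool, hip h ξ x x' ^ 2
      = ∑ h : Fin d → Fin m, ∑ ξ : Fin d → Bool, (D ^ 2 + 2 * D * R h ξ + R h ξ ^ 2) := by
        simp only [hip_eq_add_sum_offDiag, add_sq, D, R]
    _ = (m : ℝ) ^ d * 2 ^ d * D ^ 2 + 2 * D * ∑ h, ∑ ξ, R h ξ + ∑ h, ∑ ξ, R h ξ ^ 2 := by
        simp only [sum_add_distrib, ← mul_sum, sum_const, card_univ, Fintype.card_fun,
          Fintype.card_fin, Fintype.card_bool, nsmul_eq_mul]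
        push_cast
        ring
    _ = (m : ℝ) ^ d * 2 ^ d * D ^ 2 + 2 ^ d * ((m : ℝ) ^ d / m) *
          ∑ i, ∑ j ∈ univ.erase i, x i * x' j * (x i * x' j + x j * x' i) := by
        rw [sum_sum_offDiag_collisionSign_eq_zero, sum_sum_sq_offDiag_collisionSign,
          sum_offDiag_eq_sum_sum_erase]
        simp only [Fintype.card_fin, Prod.swap_prod_mk]
        ring
    _ = _ := by
        simp only [← sum_add_distrib]
        congr 2
        exact sum_congr rfl fun i _ => sum_congr rfl fun j _ => by ring

/-- Second moment of the hashed inner product: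
`E[⟨x,x'⟩_φ²] = ⟨x,x'⟩² + (1/m)(∑_{i≠j} x_i² x'_j² + ∑_{i≠j} x_i x'_i x_j x'_j)`. -/
theorem hash_kernel_second_moment (d m : ℕ) (hm : 0 < m) (x x' : Fin d → ℝ) :
    hashExp d m (fun h ξ => (hip h ξ x x') ^ 2) =
      (∑ i : Fin d, x i * x' i) ^ 2 +
        (1 / (m : ℝ)) *
          ((∑ i : Fin d, ∑ j ∈ Finset.univ.erase i, x i ^ 2 * x' j ^ 2) +
           (∑ i : Fin d, ∑ j ∈ Finset.univ.erase i, x i * x' i * x j * x' j)) := by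
  have hm' : (m : ℝ) ≠ 0 := Nat.cast_ne_zero.mpr hm.ne'
  rw [hashExp, sum_sum_hip_sq]
  field_simp
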